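/- arXiv:2301.08726 — 2 statements merged into one kernel-verified Lean document; each statement's English description precedes it below -/
import Mathlib

section
/- Let ν(t) = α(t) − ε'(t) − ε(t)/β. A twice continuously differentiable curve x : [0,∞) → ℝⁿ solves (VM-DIN-AVD) with x(0) = x0 and ẋ(0) = ẋ0 if and only if the pair (x, y), where y(t) = −ε(t)ẋ(t) − β∇f(x(t)) − ν(t)x(t), satisfies the first-order system ε(t)ẋ(t) + β∇f(x(t)) + ν(t)x(t) + y(t) = 0 and ẏ(t) + ν'(t)x(t) + (ν(t)/β)x(t) + (1/β)y(t) = 0 for all t ≥ 0, with y(0) = −ε(0)ẋ0 − β∇f(x0) − (α(0) − ε'(0) − ε(0)/β)x0. In particular, this first-order reformulation involves ∇f but not ∇²f. -/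
/-! Differentiating `y = -ε ẋ - β ∇f(x) - ν x` gives
`ẏ = -ε ẍ - ε' ẋ - β ∇²f(x) ẋ - ν ẋ - ν' x`. Substituting this and `y` itself into the left
side of the second first-order equation, the `x`-terms cancel and the coefficient of `ẋ` is
`ε' + ν + ε / β = α`, so that left side is exactly minus the left side of (VM-DIN-AVD).
The first equation is the definition of `y`, and `y(0)` is `y` evaluated at `0`. -/

open Real Filter MeasureTheory Set

noncomputable def hessApp {n : ℕ} (f : EuclideanSpace ℝ (Fin n) → ℝ)
    (x v : EuclideanSpace ℝ (Fin n)) : EuclideanSpace ℝ (Fin n) :=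
  fderiv ℝ (gradient f) x v

def StandingF {n : ℕ} (f : EuclideanSpace ℝ (Fin n) → ℝ) : Prop :=
  ConvexOn ℝ Set.univ f ∧ ContDiff ℝ 2 f ∧
    Filter.Tendsto f (Filter.cocompact _) Filter.atTop ∧
    ∀ s : Set (EuclideanSpace ℝ (Fin n)), Bornology.IsBounded s →
      ∃ μ > 0, StrongConvexOn s μ f

def AdmissibleEps (ε : ℝ → ℝ) : Prop :=
  AntitoneOn ε (Set.Ici 0) ∧ (∀ t ∈ Set.Ici (0:ℝ), 0 < ε t) ∧
    Differentiable ℝ ε ∧ Differentiable ℝ (deriv ε) ∧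
    ∃ M, ∀ t ∈ Set.Ici (0:ℝ), |deriv (deriv ε) t| ≤ M

def AdmissibleAlpha (α : ℝ → ℝ) : Prop :=
  AntitoneOn α (Set.Ici 0) ∧ (∀ t ∈ Set.Ici (0:ℝ), 0 ≤ α t) ∧ Differentiable ℝ α

def IsSolVM {n : ℕ} (f : EuclideanSpace ℝ (Fin n) → ℝ) (β : ℝ) (ε α : ℝ → ℝ)
    (x : ℝ → EuclideanSpace ℝ (Fin n)) (x0 v0 : EuclideanSpace ℝ (Fin n)) : Prop :=
  ContDiff ℝ 2 x ∧ x 0 = x0 ∧ deriv x 0 = v0 ∧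
    ∀ t ∈ Set.Ici (0:ℝ),
      ε t • deriv (deriv x) t + α t • deriv x t
        + β • hessApp f (x t) (deriv x t) + gradient f (x t) = 0

def IsSolCN {n : ℕ} (f : EuclideanSpace ℝ (Fin n) → ℝ) (β : ℝ)
    (x : ℝ → EuclideanSpace ℝ (Fin n)) (x0 : EuclideanSpace ℝ (Fin n)) : Prop :=
  ContDiff ℝ 1 x ∧ x 0 = x0 ∧
    ∀ t ∈ Set.Ici (0:ℝ), β • hessApp f (x t) (deriv x t) + gradient f (x t) = 0

def IsSolLM {n : ℕ} (f : EuclideanSpace ℝ (Fin n) → ℝ) (β : ℝ) (α : ℝ → ℝ)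
    (x : ℝ → EuclideanSpace ℝ (Fin n)) (x0 : EuclideanSpace ℝ (Fin n)) : Prop :=
  ContDiff ℝ 1 x ∧ x 0 = x0 ∧
    ∀ t ∈ Set.Ici (0:ℝ),
      α t • deriv x t + β • hessApp f (x t) (deriv x t) + gradient f (x t) = 0

theorem ContDiff.gradient {F : Type*} [NormedAddCommGroup F] [InnerProductSpace ℝ F]
    [CompleteSpace F] {f : F → ℝ} {k : WithTop ℕ∞} (hf : ContDiff ℝ (k + 1) f) :
    ContDiff ℝ k (gradient f) :=
  (InnerProductSpace.toDual ℝ F).symm.contDiff.comp (hf.fderiv_right le_rfl)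

theorem hasDerivAt_gradient_comp {n : ℕ} {f : EuclideanSpace ℝ (Fin n) → ℝ}
    (hf : ContDiff ℝ 2 f)
    {x : ℝ → EuclideanSpace ℝ (Fin n)} {t : ℝ} (hx : DifferentiableAt ℝ x t) :
    HasDerivAt (fun s => gradient f (x s)) (hessApp f (x t) (deriv x t)) t :=
  ((hf.gradient (k := 1)).differentiable one_ne_zero (x t)).hasFDerivAt.comp_hasDerivAt t
    hx.hasDerivAt

section FirstOrder

variable {E : Type*} [NormedAddCommGroup E] [NormedSpace ℝ E]

theorem firstOrder_residual_eq_neg_secondOrder_residual {β : ℝ} (hβ : β ≠ 0)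
    {ε α ν : ℝ → ℝ} {x g y : ℝ → E} {t : ℝ} {g' : E}
    (hε : DifferentiableAt ℝ ε t) (hν : DifferentiableAt ℝ ν t)
    (hx : DifferentiableAt ℝ x t) (hx' : DifferentiableAt ℝ (deriv x) t)
    (hg : HasDerivAt g g' t) (hνt : ν t = α t - deriv ε t - ε t / β)
    (hy : ∀ s, y s = -(ε s • deriv x s) - β • g s - ν s • x s) :
    deriv y t + deriv ν t • x t + (ν t / β) • x t + (1 / β) • y t
      = -(ε t • deriv (deriv x) t + α t • deriv x t + β • g' + g t) := by
  have hy' : HasDerivAt y (-(ε t • deriv (deriv x) t + deriv ε t • deriv x t) - β • g'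
      - (ν t • deriv x t + deriv ν t • x t)) t := by
    rw [funext hy]
    exact ((hε.hasDerivAt.smul hx'.hasDerivAt).neg.sub (hg.const_smul β)).sub
      (hν.hasDerivAt.smul hx.hasDerivAt)
  rw [hy'.deriv, hy t, hνt]
  match_scalars <;> field_simp <;> ring

end FirstOrder

theorem stmt1 {n : ℕ} (f : EuclideanSpace ℝ (Fin n) → ℝ) (β : ℝ) (hβ : 0 < β)
    (hf : StandingF f) (ε α : ℝ → ℝ) (hε : AdmissibleEps ε) (hα : AdmissibleAlpha α)
    (x0 v0 : EuclideanSpace ℝ (Fin n))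
    (x : ℝ → EuclideanSpace ℝ (Fin n)) (hx : ContDiff ℝ 2 x)
    (ν : ℝ → ℝ) (hν : ∀ t, ν t = α t - deriv ε t - ε t / β)
    (y : ℝ → EuclideanSpace ℝ (Fin n))
    (hy : ∀ t, y t = -(ε t • deriv x t) - β • gradient f (x t) - ν t • x t) :
    (x 0 = x0 ∧ deriv x 0 = v0 ∧
      ∀ t ∈ Set.Ici (0:ℝ),
        ε t • deriv (deriv x) t + α t • deriv x t
          + β • hessApp f (x t) (deriv x t) + gradient f (x t) = 0)
    ↔
    (x 0 = x0 ∧ deriv x 0 = v0 ∧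
      (∀ t ∈ Set.Ici (0:ℝ),
        ε t • deriv x t + β • gradient f (x t) + ν t • x t + y t = 0 ∧
        deriv y t + deriv ν t • x t + (ν t / β) • x t + (1 / β) • y t = 0) ∧
      y 0 = -(ε 0 • v0) - β • gradient f x0
            - (α 0 - deriv ε 0 - ε 0 / β) • x0) := by
  have hxd : Differentiable ℝ x := hx.differentiable two_ne_zero
  have hx'd : Differentiable ℝ (deriv x) :=
    (contDiff_succ_iff_deriv.mp hx).2.2.differentiable one_ne_zero
  have hνd : Differentiable ℝ ν := by
    rw [funext hν]
    exact (hα.2.2.sub hε.2.2.2.1).sub (hε.2.2.1.div_const β)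
  have hres : ∀ t, deriv y t + deriv ν t • x t + (ν t / β) • x t + (1 / β) • y t
      = -(ε t • deriv (deriv x) t + α t • deriv x t + β • hessApp f (x t) (deriv x t)
          + gradient f (x t)) := fun t =>
    firstOrder_residual_eq_neg_secondOrder_residual hβ.ne' (hε.2.2.1 t) (hνd t) (hxd t)
      (hx'd t) (hasDerivAt_gradient_comp hf.2.1 (hxd t)) (hν t) hy
  constructor
  · rintro ⟨h0, h1, hVM⟩
    refine ⟨h0, h1, fun t ht => ⟨by rw [hy t]; abel, ?_⟩, by rw [hy 0, hν 0, h0, h1]⟩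
    rw [hres t, hVM t ht, neg_zero]
  · rintro ⟨h0, h1, hsys, -⟩
    exact ⟨h0, h1, fun t ht => neg_eq_zero.mp ((hres t).symm.trans (hsys t ht).2)⟩
end

section
/- Suppose ε and α are three times continuously differentiable and ε(0) = ε0 satisfies ε0 < (βλ)² / (2|α'(t)| + 4λ) for all t ≥ 0. Define p(t) = (α(t) + βλ)/ε(t) and r(t) = p(t)²/4 + p'(t)/2 − λ/ε(t). Then p and r are twice continuously differentiable, r(t) > 0 for all t ≥ 0, and if x solves the scalar ODE ε(t)ẍ(t) + (α(t)+βλ)ẋ(t) + λx(t) = 0 with x(0) = x0, ẋ(0) = ẋ0, then the function y(t) = x(t) exp(∫₀ᵗ p(s)/2 ds) solves ÿ(t) − r(t)y(t) = 0 for all t ≥ 0, with y(0) = x0 and ẏ(0) = ẋ0 + (p(0)/2)x0. -/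
open Real Filter MeasureTheory Set

/-!
The substitution `y = x * exp (∫₀ᵗ p / 2)` is Liouville's transformation to normal form: since
`y'' = (x'' + p x' + (p² / 4 + p' / 2) x) * exp (∫₀ᵗ p / 2)`, the equation
`x'' + p x' + (λ / ε) x = 0` becomes `y'' = r y`. For the positivity of `r`, write
`4 ε² r = (α + βλ)² + 2 α' ε - 2 (α + βλ) ε' - 4 λ ε`: the `ε'` term is nonnegative as `ε` is
non-increasing, and `(α + βλ)² ≥ (βλ)² > (2 |α'| + 4 λ) ε(0) ≥ (2 |α'| + 4 λ) ε` absorbs the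
rest. All of this takes place on a half-line `(l, ∞)`, `l < 0`, on which `ε` stays positive, so
that `p` is `C³` there.
-/

theorem exists_Ioi_subset_of_isOpen_of_Ici_subset {s : Set ℝ} {a : ℝ} (hs : IsOpen s)
    (ha : Ici a ⊆ s) : ∃ l < a, Ioi l ⊆ s := by
  obtain ⟨l, hla, hl⟩ := exists_Ioc_subset_of_mem_nhds (hs.mem_nhds (ha self_mem_Ici))
    ⟨a - 1, by linarith⟩
  refine ⟨l, hla, fun t ht => ?_⟩
  rcases le_total t a with hta | hat
  · exact hl ⟨ht, hta⟩
  · exact ha hat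

section LiouvilleTransform

variable {p x : ℝ → ℝ} {U : Set ℝ} {a t : ℝ}

theorem hasDerivAt_exp_integral_half (hU : IsOpen U) (hUc : U.OrdConnected)
    (hp : ContinuousOn p U) (ha : a ∈ U) (ht : t ∈ U) :
    HasDerivAt (fun u => exp (∫ s in a..u, p s / 2))
      (p t / 2 * exp (∫ s in a..t, p s / 2)) t := by
  have hp2 : ContinuousOn (fun s => p s / 2) U := hp.div_const 2
  have hI := intervalIntegral.integral_hasDerivAt_right
    ((hp2.mono (hUc.uIcc_subset ha ht)).intervalIntegrable)
    (hp2.stronglyMeasurableAtFilter hU t ht) (hp2.continuousAt (hU.mem_nhds ht))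
  simpa only [mul_comm] using hI.exp

theorem hasDerivAt_mul_exp_integral_half (hU : IsOpen U) (hUc : U.OrdConnected)
    (hp : ContinuousOn p U) (ha : a ∈ U) (ht : t ∈ U) (hx : DifferentiableAt ℝ x t) :
    HasDerivAt (fun u => x u * exp (∫ s in a..u, p s / 2))
      ((deriv x t + p t / 2 * x t) * exp (∫ s in a..t, p s / 2)) t :=
  (hx.hasDerivAt.mul (hasDerivAt_exp_integral_half hU hUc hp ha ht)).congr_deriv (by ring)

theorem deriv_deriv_mul_exp_integral_half (hU : IsOpen U) (hUc : U.OrdConnected)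
    (hp : ContinuousOn p U) (ha : a ∈ U) (ht : t ∈ U) (hpt : DifferentiableAt ℝ p t)
    (hx : Differentiable ℝ x) (hx' : DifferentiableAt ℝ (deriv x) t) :
    deriv (deriv fun u => x u * exp (∫ s in a..u, p s / 2)) t =
      (deriv (deriv x) t + p t * deriv x t + (p t ^ 2 / 4 + deriv p t / 2) * x t) *
        exp (∫ s in a..t, p s / 2) := by
  have hderiv : deriv (fun u => x u * exp (∫ s in a..u, p s / 2)) =ᶠ[nhds t]
      fun u => (deriv x u + p u / 2 * x u) * exp (∫ s in a..u, p s / 2) := by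
    filter_upwards [hU.mem_nhds ht] with u hu
    exact (hasDerivAt_mul_exp_integral_half hU hUc hp ha hu (hx u)).deriv
  rw [hderiv.deriv_eq]
  have := (hx'.hasDerivAt.fun_add ((hpt.hasDerivAt.div_const 2).fun_mul (hx t).hasDerivAt)).fun_mul
    (hasDerivAt_exp_integral_half hU hUc hp ha ht)
  rw [this.deriv]
  ring

theorem ContDiffOn.liouville_potential (hU : IsOpen U) (hp : ContDiffOn ℝ 3 p U)
    {q : ℝ → ℝ} (hq : ContDiffOn ℝ 2 q U) :
    ContDiffOn ℝ 2 (fun t => p t ^ 2 / 4 + deriv p t / 2 - q t) U :=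
  (((hp.of_le (by norm_num)).pow 2).div_const 4).add
    ((hp.deriv_of_isOpen hU (by norm_num)).div_const 2) |>.sub hq

end LiouvilleTransform

theorem liouville_potential_pos {a a' b e e' e₀ lam : ℝ} (ha : 0 ≤ a) (hb : 0 < b)
    (hlam : 0 < lam) (he : 0 < e) (he' : e' ≤ 0) (he₀ : e ≤ e₀)
    (hsmall : e₀ < b ^ 2 / (2 * |a'| + 4 * lam)) :
    0 < ((a + b) / e) ^ 2 / 4 + ((a' * e - (a + b) * e') / e ^ 2) / 2 - lam / e := by
  have hD : 0 < 2 * |a'| + 4 * lam := by positivity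
  have hDe : (2 * |a'| + 4 * lam) * e < b ^ 2 :=
    ((mul_le_mul_of_nonneg_left he₀ hD.le).trans_lt ((lt_div_iff₀' hD).mp hsmall))
  have hnum : 0 < (a + b) ^ 2 + 2 * (a' * e - (a + b) * e') - 4 * lam * e := by
    nlinarith [neg_abs_le a', mul_nonneg (add_nonneg ha hb.le) (neg_nonneg.mpr he')]
  calc 0 < ((a + b) ^ 2 + 2 * (a' * e - (a + b) * e') - 4 * lam * e) / (4 * e ^ 2) := by positivity
    _ = _ := by field_simp; ring

theorem stmt12_general (lam β : ℝ) (hlam : 0 < lam) (hβ : 0 < β)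
    (ε α : ℝ → ℝ)
    (hε_anti : AntitoneOn ε (Set.Ici 0)) (hε_pos : ∀ t ∈ Set.Ici (0:ℝ), 0 < ε t)
    (hα_nonneg : ∀ t ∈ Set.Ici (0:ℝ), 0 ≤ α t)
    (hε3 : ContDiff ℝ 3 ε) (hα3 : ContDiff ℝ 3 α)
    (hsmall : ∀ t ∈ Set.Ici (0:ℝ), ε 0 < (β * lam) ^ 2 / (2 * |deriv α t| + 4 * lam))
    (p r : ℝ → ℝ)
    (hp : ∀ t, p t = (α t + β * lam) / ε t)
    (hr : ∀ t, r t = p t ^ 2 / 4 + deriv p t / 2 - lam / ε t) :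
    ContDiffOn ℝ 2 p (Set.Ici 0) ∧ ContDiffOn ℝ 2 r (Set.Ici 0) ∧
    (∀ t ∈ Set.Ici (0:ℝ), 0 < r t) ∧
    ∀ x : ℝ → ℝ, ∀ x0 v0 : ℝ, ContDiff ℝ 2 x → x 0 = x0 → deriv x 0 = v0 →
      (∀ t ∈ Set.Ici (0:ℝ),
        ε t * deriv (deriv x) t + (α t + β * lam) * deriv x t + lam * x t = 0) →
      ∀ y : ℝ → ℝ,
        (∀ t, y t = x t * Real.exp (∫ s in (0:ℝ)..t, p s / 2)) →
        (∀ t ∈ Set.Ici (0:ℝ), deriv (deriv y) t - r t * y t = 0) ∧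
        y 0 = x0 ∧ deriv y 0 = v0 + p 0 / 2 * x0 := by
  obtain ⟨l, hl, hεl⟩ : ∃ l < 0, Ioi l ⊆ ε ⁻¹' Ioi 0 :=
    exists_Ioi_subset_of_isOpen_of_Ici_subset (isOpen_Ioi.preimage hε3.continuous) hε_pos
  have hIci : Ici 0 ⊆ Ioi l := Ici_subset_Ioi.mpr hl
  have hp3 : ContDiffOn ℝ 3 p (Ioi l) :=
    ((hα3.contDiffOn.add contDiffOn_const).div hε3.contDiffOn fun t ht => (hεl ht).ne').congr
      fun t _ => hp t
  have hp2 : ContDiffOn ℝ 2 p (Ioi l) := hp3.of_le (by norm_num)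
  have hpd : ∀ t ∈ Ioi l, DifferentiableAt ℝ p t := fun t ht =>
    (hp3.differentiableOn (by norm_num) t ht).differentiableAt (isOpen_Ioi.mem_nhds ht)
  have hr2 : ContDiffOn ℝ 2 r (Ioi l) :=
    (hp3.liouville_potential isOpen_Ioi (contDiffOn_const.div (hε3.of_le (by norm_num)).contDiffOn
      fun t ht => (hεl ht).ne')).congr fun t _ => hr t
  refine ⟨hp2.mono hIci, hr2.mono hIci, fun t ht => ?_, ?_⟩
  · have hεd := hε3.differentiable (by norm_num) t
    have hpt : deriv p t = (deriv α t * ε t - (α t + β * lam) * deriv ε t) / ε t ^ 2 := by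
      rw [show p = fun t => (α t + β * lam) / ε t from funext hp]
      exact (((hα3.differentiable (by norm_num) t).hasDerivAt.add_const _).fun_div
        hεd.hasDerivAt (hε_pos t ht).ne').deriv
    rw [hr, hpt, hp]
    exact liouville_potential_pos (hα_nonneg t ht) (mul_pos hβ hlam) hlam (hε_pos t ht)
      (hεd.derivWithin (uniqueDiffOn_Ici 0 t ht) ▸ hε_anti.derivWithin_nonpos)
      (hε_anti self_mem_Ici ht ht) (hsmall t ht)
  intro x x0 v0 hx hx0 hv0 hode y hy
  obtain rfl : y = (fun t => x t * exp (∫ s in (0:ℝ)..t, p s / 2)) := funext hy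
  have h0 : (0 : ℝ) ∈ Ioi l := hl
  refine ⟨fun t ht => ?_, by simp [hx0], ?_⟩
  · rw [deriv_deriv_mul_exp_integral_half isOpen_Ioi ordConnected_Ioi hp2.continuousOn h0
      (hIci ht) (hpd t (hIci ht)) (hx.differentiable (by norm_num)) (hx.differentiable_deriv_two t),
      hr]
    have hnormal : deriv (deriv x) t + p t * deriv x t + lam / ε t * x t = 0 := by
      rw [hp]
      field_simp [(hε_pos t ht).ne']
      linear_combination hode t ht
    linear_combination exp (∫ s in (0:ℝ)..t, p s / 2) * hnormal
  · rw [(hasDerivAt_mul_exp_integral_half isOpen_Ioi ordConnected_Ioi hp2.continuousOn h0 h0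
      (hx.differentiable (by norm_num) 0)).deriv]
    simp [hx0, hv0]

theorem stmt12 (lam β : ℝ) (hlam : 0 < lam) (hβ : 0 < β)
    (ε α : ℝ → ℝ)
    (hε_anti : AntitoneOn ε (Set.Ici 0)) (hε_pos : ∀ t ∈ Set.Ici (0:ℝ), 0 < ε t)
    (hα_anti : AntitoneOn α (Set.Ici 0)) (hα_nonneg : ∀ t ∈ Set.Ici (0:ℝ), 0 ≤ α t)
    (hε3 : ContDiff ℝ 3 ε) (hα3 : ContDiff ℝ 3 α)
    (hsmall : ∀ t ∈ Set.Ici (0:ℝ), ε 0 < (β * lam) ^ 2 / (2 * |deriv α t| + 4 * lam))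
    (p r : ℝ → ℝ)
    (hp : ∀ t, p t = (α t + β * lam) / ε t)
    (hr : ∀ t, r t = p t ^ 2 / 4 + deriv p t / 2 - lam / ε t) :
    ContDiffOn ℝ 2 p (Set.Ici 0) ∧ ContDiffOn ℝ 2 r (Set.Ici 0) ∧
    (∀ t ∈ Set.Ici (0:ℝ), 0 < r t) ∧
    ∀ x : ℝ → ℝ, ∀ x0 v0 : ℝ, ContDiff ℝ 2 x → x 0 = x0 → deriv x 0 = v0 →
      (∀ t ∈ Set.Ici (0:ℝ),
        ε t * deriv (deriv x) t + (α t + β * lam) * deriv x t + lam * x t = 0) →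
      ∀ y : ℝ → ℝ,
        (∀ t, y t = x t * Real.exp (∫ s in (0:ℝ)..t, p s / 2)) →
        (∀ t ∈ Set.Ici (0:ℝ), deriv (deriv y) t - r t * y t = 0) ∧
        y 0 = x0 ∧ deriv y 0 = v0 + p 0 / 2 * x0 :=
  stmt12_general lam β hlam hβ ε α hε_anti hε_pos hα_nonneg hε3 hα3 hsmall p r hp hr
end
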